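/- Let l : K → L be a graph morphism and m : L → G a graph monomorphism, with G = (L + L̄) +ₑ L̃. The final pullback complement (pushback) of (m, l) exists and is given by D = (K + L̄) +ₑ K̃, where K̃ has one edge (e, n, p) : n → p for every pair of nodes n, p of D and every linking edge e : l₁(n) → l₁(p) in L̃, with d the canonical inclusion and l₁ = (l + id_{L̄}) +ₑ l̃, l̃(e, n, p) = e. -/

import Mathlib

universe u

structure MGraph : Type (u + 1) where
  N : Type u
  E : Type u
  src : E → N
  tgt : E → N

@[ext]
structure GraphHom (X Y : MGraph.{u}) where
  fN : X.N → Y.N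
  fE : X.E → Y.E
  hsrc : ∀ e, Y.src (fE e) = fN (X.src e)
  htgt : ∀ e, Y.tgt (fE e) = fN (X.tgt e)

def GraphHom.id (X : MGraph.{u}) : GraphHom X X :=
  ⟨_root_.id, _root_.id, fun _ => rfl, fun _ => rfl⟩

/-- `g.comp f` is the composite `g ∘ f`. -/
def GraphHom.comp {X Y Z : MGraph.{u}} (g : GraphHom Y Z) (f : GraphHom X Y) :
    GraphHom X Z :=
  ⟨g.fN ∘ f.fN, g.fE ∘ f.fE,
    fun e => by simp [Function.comp, g.hsrc, f.hsrc],
    fun e => by simp [Function.comp, g.htgt, f.htgt]⟩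

section
variable (X Xbar : MGraph.{u}) (Xt : Type u) (xs xt : Xt → X.N ⊕ Xbar.N)

/-- The graph `(X + Xbar) +ₑ Xt` built from decomposition data. -/
def sumGraph : MGraph.{u} where
  N := X.N ⊕ Xbar.N
  E := X.E ⊕ Xbar.E ⊕ Xt
  src := Sum.elim (Sum.inl ∘ X.src) (Sum.elim (Sum.inr ∘ Xbar.src) xs)
  tgt := Sum.elim (Sum.inl ∘ X.tgt) (Sum.elim (Sum.inr ∘ Xbar.tgt) xt)

/-- The canonical inclusion (a monomorphism) `X → (X + Xbar) +ₑ Xt`. -/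
def sumIncl : GraphHom X (sumGraph X Xbar Xt xs xt) :=
  ⟨Sum.inl, Sum.inl, fun _ => rfl, fun _ => rfl⟩

end

section
variable (K L Lbar : MGraph.{u}) (l : GraphHom K L)
variable (Lt : Type u) (ls lt : Lt → L.N ⊕ Lbar.N)
variable (Kbar : MGraph.{u}) (lbar : GraphHom Kbar Lbar)
variable (Kt : Type u) (ks kt : Kt → K.N ⊕ Kbar.N) (ltil : Kt → Lt)
variable (hls : ∀ e, ls (ltil e) = Sum.map l.fN lbar.fN (ks e))
variable (hlt : ∀ e, lt (ltil e) = Sum.map l.fN lbar.fN (kt e))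

/-- The morphism `l₁ = (l + lbar) +ₑ l̃ : (K + Kbar) +ₑ Kt → (L + Lbar) +ₑ Lt`. -/
def pbcMor : GraphHom (sumGraph K Kbar Kt ks kt) (sumGraph L Lbar Lt ls lt) where
  fN := Sum.map l.fN lbar.fN
  fE := Sum.map l.fE (Sum.map lbar.fE ltil)
  hsrc := by rintro (e | e | e) <;> simp [sumGraph, l.hsrc, lbar.hsrc, hls]
  htgt := by rintro (e | e | e) <;> simp [sumGraph, l.htgt, lbar.htgt, hlt]

end

section
variable (K L Lbar : MGraph.{u}) (l : GraphHom K L)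
variable (Lt : Type u) (ls lt : Lt → L.N ⊕ Lbar.N)

/-- The linking edges of the pushback `D = (K + Lbar) +ₑ Kt`: one edge
`(e, n, p) : n → p` for every pair of nodes `n, p` of `D` and every linking
edge `e : l₁ n → l₁ p` in `Lt`. -/
def pbKt : Type u :=
  {x : ((K.N ⊕ Lbar.N) × (K.N ⊕ Lbar.N)) × Lt //
    ls x.2 = Sum.map l.fN _root_.id x.1.1 ∧
    lt x.2 = Sum.map l.fN _root_.id x.1.2}

/-- The pushback (final pullback complement) graph `D = (K + Lbar) +ₑ Kt`. -/
def pbD : MGraph.{u} where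
  N := K.N ⊕ Lbar.N
  E := K.E ⊕ Lbar.E ⊕ pbKt K L Lbar l Lt ls lt
  src := Sum.elim (Sum.inl ∘ K.src) (Sum.elim (Sum.inr ∘ Lbar.src) (fun x => x.1.1.1))
  tgt := Sum.elim (Sum.inl ∘ K.tgt) (Sum.elim (Sum.inr ∘ Lbar.tgt) (fun x => x.1.1.2))

/-- The canonical inclusion `d : K → D`. -/
def pbd : GraphHom K (pbD K L Lbar l Lt ls lt) :=
  ⟨Sum.inl, Sum.inl, fun _ => rfl, fun _ => rfl⟩

/-- The morphism `l₁ = (l + id) +ₑ l̃ : D → G`, `l̃ (e, n, p) = e`. -/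
def pbl1 : GraphHom (pbD K L Lbar l Lt ls lt) (sumGraph L Lbar Lt ls lt) where
  fN := Sum.map l.fN _root_.id
  fE := Sum.map l.fE (Sum.map _root_.id (fun x => x.1.2))
  hsrc := by
    rintro (e | e | e) <;>
      simp [pbD, sumGraph, l.hsrc]
    exact e.2.1
  htgt := by
    rintro (e | e | e) <;>
      simp [pbD, sumGraph, l.htgt]
    exact e.2.2

end

/-!
The square `(d, l₁)` is a pullback because `l₁` is `l` on `K` and sends the rest of `D` outside
`L`. For finality, testing the pullback property of a pullback complement `(d', l₁')` against the
one-node and the one-edge graph shows that `d'` maps `K` bijectively onto the part of `D'` lying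
over `L`. So the comparison `δ : D' → D` is forced there, and forced by `l₁'` on nodes and on edges
over `Lbar`. An edge of `D'` over a linking edge `e : l₁' n → l₁' p` must go to the edge
`(e, δ n, δ p)`, which `D` contains because `Kt` has a copy of `e` between every pair of nodes with
the right images.
-/

namespace GraphHom

variable {W X Y Z : MGraph.{u}}

theorem congr_fN {f g : GraphHom X Y} (h : f = g) (x : X.N) : f.fN x = g.fN x := h ▸ rfl

theorem congr_fE {f g : GraphHom X Y} (h : f = g) (e : X.E) : f.fE e = g.fE e := h ▸ rfl

theorem cancel_left {g : GraphHom Y Z} (hN : Function.Injective g.fN)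
    (hE : Function.Injective g.fE) {f₁ f₂ : GraphHom X Y} (h : g.comp f₁ = g.comp f₂) :
    f₁ = f₂ := by
  ext x
  · exact hN (congr_fN h x)
  · exact hE (congr_fE h x)

theorem exists_comp_eq_of_forall_mem_range (g : GraphHom Y Z) (f : GraphHom X Z)
    (hg : Function.Injective g.fN) (hN : ∀ x, ∃ y, g.fN y = f.fN x)
    (hE : ∀ e, ∃ y, g.fE y = f.fE e) : ∃ κ : GraphHom X Y, g.comp κ = f := by
  choose κN hκN using hN
  choose κE hκE using hE
  refine ⟨⟨κN, κE, fun e => hg ?_, fun e => hg ?_⟩, ?_⟩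
  · rw [← g.hsrc, hκE, f.hsrc, hκN]
  · rw [← g.htgt, hκE, f.htgt, hκN]
  · ext x
    · exact hκN x
    · exact hκE x

theorem existsUnique_fill (a : GraphHom W X) (b : GraphHom W Y) (f : GraphHom Y Z)
    (g : GraphHom X Z)
    (hN : ∀ x, ∃! y, f.fN y = g.fN x ∧ ∀ w, a.fN w = x → y = b.fN w)
    (hE : ∀ δN : X.N → Y.N, (∀ x, f.fN (δN x) = g.fN x ∧ ∀ w, a.fN w = x → δN x = b.fN w) →
      ∀ e, ∃! y, (f.fE y = g.fE e ∧ ∀ w, a.fE w = e → y = b.fE w) ∧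
        Y.src y = δN (X.src e) ∧ Y.tgt y = δN (X.tgt e)) :
    ∃! δ : GraphHom X Y, δ.comp a = b ∧ f.comp δ = g := by
  choose δN hδN using fun x => (hN x).exists
  choose δE hδE using fun e => (hE δN hδN e).exists
  refine ⟨⟨δN, δE, fun e => (hδE e).2.1, fun e => (hδE e).2.2⟩, ⟨?_, ?_⟩, ?_⟩
  · ext w
    · exact (hδN (a.fN w)).2 w rfl
    · exact (hδE (a.fE w)).1.2 w rfl
  · ext x
    · exact (hδN x).1
    · exact (hδE x).1.1
  · rintro δ ⟨hb, hg⟩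
    have hδN' : ∀ x, δ.fN x = δN x := fun x =>
      (hN x).unique ⟨congr_fN hg x, fun w hw => hw ▸ congr_fN hb w⟩ (hδN x)
    ext e
    · exact hδN' e
    · refine (hE δN hδN e).unique ⟨⟨congr_fE hg e, fun w hw => hw ▸ congr_fE hb w⟩, ?_, ?_⟩
        (hδE e)
      · rw [δ.hsrc, hδN']
      · rw [δ.htgt, hδN']

end GraphHom

def pointGraph : MGraph.{u} := ⟨PUnit, PEmpty, PEmpty.elim, PEmpty.elim⟩

def pointHom (X : MGraph.{u}) (x : X.N) : GraphHom pointGraph X :=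
  ⟨fun _ => x, PEmpty.elim, fun e => e.elim, fun e => e.elim⟩

theorem comp_pointHom {X Y : MGraph.{u}} (f : GraphHom X Y) (x : X.N) :
    f.comp (pointHom X x) = pointHom Y (f.fN x) := by
  ext e
  · rfl
  · exact e.elim

def arrowGraph : MGraph.{u} := ⟨ULift Bool, PUnit, fun _ => ⟨false⟩, fun _ => ⟨true⟩⟩

def arrowHom (X : MGraph.{u}) (e : X.E) : GraphHom arrowGraph X :=
  ⟨fun b => if b.down then X.tgt e else X.src e, fun _ => e, fun _ => rfl, fun _ => rfl⟩

theorem comp_arrowHom {X Y : MGraph.{u}} (f : GraphHom X Y) (e : X.E) :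
    f.comp (arrowHom X e) = arrowHom Y (f.fE e) := by
  ext ⟨b⟩
  · cases b
    · exact (f.hsrc e).symm
    · exact (f.htgt e).symm
  · rfl

def IsPullbackSquare {K L D G : MGraph.{u}} (l : GraphHom K L) (d : GraphHom K D)
    (m : GraphHom L G) (l₁ : GraphHom D G) : Prop :=
  m.comp l = l₁.comp d ∧
    ∀ (K' : MGraph.{u}) (l' : GraphHom K' L) (d' : GraphHom K' D),
      m.comp l' = l₁.comp d' → ∃! κ : GraphHom K' K, l.comp κ = l' ∧ d.comp κ = d'

namespace IsPullbackSquare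

variable {K L D G : MGraph.{u}} {l : GraphHom K L} {d : GraphHom K D} {m : GraphHom L G}
  {l₁ : GraphHom D G}

theorem existsUnique_node (h : IsPullbackSquare l d m l₁) (hm : Function.Injective m.fN)
    {x : D.N} {a : L.N} (hx : l₁.fN x = m.fN a) : ∃! k, d.fN k = x := by
  obtain ⟨κ, ⟨-, hd⟩, hκ⟩ := h.2 pointGraph (pointHom L a) (pointHom D x)
    (by rw [comp_pointHom, comp_pointHom, hx])
  refine ⟨κ.fN ⟨⟩, GraphHom.congr_fN hd ⟨⟩, fun k hk => ?_⟩
  have hlk : l.fN k = a := hm ((GraphHom.congr_fN h.1 k).trans ((congrArg l₁.fN hk).trans hx))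
  have hκk : pointHom K k = κ :=
    hκ _ ⟨by rw [comp_pointHom, hlk], by rw [comp_pointHom, hk]⟩
  exact GraphHom.congr_fN hκk ⟨⟩

theorem existsUnique_edge (h : IsPullbackSquare l d m l₁) (hm : Function.Injective m.fE)
    {x : D.E} {a : L.E} (hx : l₁.fE x = m.fE a) : ∃! k, d.fE k = x := by
  obtain ⟨κ, ⟨-, hd⟩, hκ⟩ := h.2 arrowGraph (arrowHom L a) (arrowHom D x)
    (by rw [comp_arrowHom, comp_arrowHom, hx])
  refine ⟨κ.fE ⟨⟩, GraphHom.congr_fE hd ⟨⟩, fun k hk => ?_⟩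
  have hlk : l.fE k = a := hm ((GraphHom.congr_fE h.1 k).trans ((congrArg l₁.fE hk).trans hx))
  have hκk : arrowHom K k = κ :=
    hκ _ ⟨by rw [comp_arrowHom, hlk], by rw [comp_arrowHom, hk]⟩
  exact GraphHom.congr_fE hκk ⟨⟩

end IsPullbackSquare

section Pushback

variable {K L Lbar : MGraph.{u}} {l : GraphHom K L} {Lt : Type u} {ls lt : Lt → L.N ⊕ Lbar.N}

theorem pbl1_fN_eq_inl {y : (pbD K L Lbar l Lt ls lt).N} {a : L.N}
    (h : (pbl1 K L Lbar l Lt ls lt).fN y = Sum.inl a) : ∃ k, Sum.inl k = y := by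
  rcases y with k | b
  · exact ⟨k, rfl⟩
  · cases h

theorem pbl1_fN_eq_inr {y : (pbD K L Lbar l Lt ls lt).N} {b : Lbar.N}
    (h : (pbl1 K L Lbar l Lt ls lt).fN y = Sum.inr b) : y = Sum.inr b := by
  rcases y with k | b'
  · cases h
  · exact congrArg Sum.inr (Sum.inr_injective h)

theorem pbl1_fE_eq_inl {y : (pbD K L Lbar l Lt ls lt).E} {a : L.E}
    (h : (pbl1 K L Lbar l Lt ls lt).fE y = Sum.inl a) : ∃ k, Sum.inl k = y := by
  rcases y with k | b | x
  · exact ⟨k, rfl⟩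
  · cases h
  · cases h

theorem pbD_edge_eq_of_pbl1_fE_eq_inr {y y' : (pbD K L Lbar l Lt ls lt).E} {w : Lbar.E ⊕ Lt}
    (hy : (pbl1 K L Lbar l Lt ls lt).fE y = Sum.inr w)
    (hy' : (pbl1 K L Lbar l Lt ls lt).fE y' = Sum.inr w)
    (hs : (pbD K L Lbar l Lt ls lt).src y = (pbD K L Lbar l Lt ls lt).src y')
    (ht : (pbD K L Lbar l Lt ls lt).tgt y = (pbD K L Lbar l Lt ls lt).tgt y') :
    y = y' := by
  rcases y with k | b | ⟨⟨⟨n, p⟩, t⟩, hx⟩ <;> rcases y' with k' | b' | ⟨⟨⟨n', p'⟩, t'⟩, hx'⟩ <;>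
    simp only [pbl1, pbD, Sum.map_inl, Sum.map_inr, Sum.elim_inr, reduceCtorEq, id] at hy hy' hs ht
  all_goals grind

theorem isPullbackSquare_pbd_pbl1 :
    IsPullbackSquare l (pbd K L Lbar l Lt ls lt) (sumIncl L Lbar Lt ls lt)
      (pbl1 K L Lbar l Lt ls lt) := by
  refine ⟨rfl, fun K' l' d'' hc => ?_⟩
  obtain ⟨κ, hκ⟩ := (pbd K L Lbar l Lt ls lt).exists_comp_eq_of_forall_mem_range d''
    Sum.inl_injective (fun x => pbl1_fN_eq_inl (GraphHom.congr_fN hc x).symm)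
    (fun e => pbl1_fE_eq_inl (GraphHom.congr_fE hc e).symm)
  refine ⟨κ, ⟨GraphHom.cancel_left (g := sumIncl L Lbar Lt ls lt) Sum.inl_injective
    Sum.inl_injective ?_, hκ⟩,
    fun κ' hκ' => GraphHom.cancel_left (g := pbd K L Lbar l Lt ls lt) Sum.inl_injective
      Sum.inl_injective (hκ'.2.trans hκ.symm)⟩
  -- `pbl1 ∘ pbd = sumIncl ∘ l` holds definitionally
  rw [hc, ← hκ]
  rfl

section Finality

variable {D' : MGraph.{u}} {d' : GraphHom K D'} {l₁' : GraphHom D' (sumGraph L Lbar Lt ls lt)}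

theorem existsUnique_node_fill (hpb : IsPullbackSquare l d' (sumIncl L Lbar Lt ls lt) l₁')
    (x : D'.N) :
    ∃! y : (pbD K L Lbar l Lt ls lt).N, (pbl1 K L Lbar l Lt ls lt).fN y = l₁'.fN x ∧
      ∀ k, d'.fN k = x → y = (pbd K L Lbar l Lt ls lt).fN k := by
  rcases h : l₁'.fN x with a | b
  · obtain ⟨k₀, hk₀, huniq⟩ := hpb.existsUnique_node (a := a) Sum.inl_injective h
    refine ⟨Sum.inl k₀, ⟨?_, fun k hk => congrArg Sum.inl (huniq k hk).symm⟩,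
      fun y hy => hy.2 k₀ hk₀⟩
    rw [← h, ← hk₀]
    exact GraphHom.congr_fN hpb.1 k₀
  · refine ⟨Sum.inr b, ⟨rfl, fun k hk => ?_⟩, fun y hy => pbl1_fN_eq_inr hy.1⟩
    have := (GraphHom.congr_fN hpb.1 k).trans (congrArg l₁'.fN hk |>.trans h)
    cases this

theorem existsUnique_edge_fill (hpb : IsPullbackSquare l d' (sumIncl L Lbar Lt ls lt) l₁')
    (δN : D'.N → (pbD K L Lbar l Lt ls lt).N)
    (hδN : ∀ x, (pbl1 K L Lbar l Lt ls lt).fN (δN x) = l₁'.fN x ∧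
      ∀ k, d'.fN k = x → δN x = (pbd K L Lbar l Lt ls lt).fN k)
    (e : D'.E) :
    ∃! y : (pbD K L Lbar l Lt ls lt).E,
      ((pbl1 K L Lbar l Lt ls lt).fE y = l₁'.fE e ∧
        ∀ k, d'.fE k = e → y = (pbd K L Lbar l Lt ls lt).fE k) ∧
      (pbD K L Lbar l Lt ls lt).src y = δN (D'.src e) ∧
      (pbD K L Lbar l Lt ls lt).tgt y = δN (D'.tgt e) := by
  have hnotK : ∀ w, l₁'.fE e = Sum.inr w → ∀ k, d'.fE k ≠ e := fun w h k hk => by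
    have := (GraphHom.congr_fE hpb.1 k).trans (congrArg l₁'.fE hk |>.trans h)
    cases this
  rcases h : l₁'.fE e with a | w
  · obtain ⟨k₀, hk₀, huniq⟩ := hpb.existsUnique_edge (a := a) Sum.inl_injective h
    refine ⟨Sum.inl k₀, ⟨⟨?_, fun k hk => congrArg Sum.inl (huniq k hk).symm⟩, ?_, ?_⟩,
      fun y hy => hy.1.2 k₀ hk₀⟩
    · rw [← h, ← hk₀]
      exact GraphHom.congr_fE hpb.1 k₀
    · rw [← hk₀, d'.hsrc, (hδN _).2 _ rfl]
      rfl
    · rw [← hk₀, d'.htgt, (hδN _).2 _ rfl]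
      rfl
  · refine existsUnique_of_exists_of_unique ?_ fun y y' hy hy' =>
      pbD_edge_eq_of_pbl1_fE_eq_inr hy.1.1 hy'.1.1
        (hy.2.1.trans hy'.2.1.symm) (hy.2.2.trans hy'.2.2.symm)
    have hsrc : (sumGraph L Lbar Lt ls lt).src (Sum.inr w) = l₁'.fN (D'.src e) := by
      rw [← h, l₁'.hsrc]
    have htgt : (sumGraph L Lbar Lt ls lt).tgt (Sum.inr w) = l₁'.fN (D'.tgt e) := by
      rw [← h, l₁'.htgt]
    rcases w with b | t
    · refine ⟨Sum.inr (Sum.inl b), ⟨⟨rfl, fun k hk => (hnotK _ h k hk).elim⟩, ?_, ?_⟩⟩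
      · exact (pbl1_fN_eq_inr ((hδN _).1.trans hsrc.symm)).symm
      · exact (pbl1_fN_eq_inr ((hδN _).1.trans htgt.symm)).symm
    · refine ⟨Sum.inr (Sum.inr ⟨((δN (D'.src e), δN (D'.tgt e)), t),
        hsrc.trans (hδN _).1.symm, htgt.trans (hδN _).1.symm⟩),
        ⟨⟨rfl, fun k hk => (hnotK _ h k hk).elim⟩, rfl, rfl⟩⟩

theorem existsUnique_pbD_of_isPullbackSquare
    (hpb : IsPullbackSquare l d' (sumIncl L Lbar Lt ls lt) l₁') :
    ∃! δ : GraphHom D' (pbD K L Lbar l Lt ls lt),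
      δ.comp d' = pbd K L Lbar l Lt ls lt ∧ (pbl1 K L Lbar l Lt ls lt).comp δ = l₁' :=
  GraphHom.existsUnique_fill _ _ _ _ (existsUnique_node_fill hpb)
    (existsUnique_edge_fill hpb)

end Finality

end Pushback

theorem graph_final_pullback_complement (K L Lbar : MGraph.{u})
    (l : GraphHom K L) (Lt : Type u) (ls lt : Lt → L.N ⊕ Lbar.N) :
    -- the square is a pullback complement of (m, l):
    (((sumIncl L Lbar Lt ls lt).comp l =
        (pbl1 K L Lbar l Lt ls lt).comp (pbd K L Lbar l Lt ls lt)) ∧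
      ∀ (K' : MGraph.{u}) (l' : GraphHom K' L)
        (d'' : GraphHom K' (pbD K L Lbar l Lt ls lt)),
        (sumIncl L Lbar Lt ls lt).comp l' = (pbl1 K L Lbar l Lt ls lt).comp d'' →
        ∃! κ : GraphHom K' K,
          l.comp κ = l' ∧ (pbd K L Lbar l Lt ls lt).comp κ = d'') ∧
    -- and it is final among all pullback complements of (m, l):
    ∀ (D' : MGraph.{u}) (d' : GraphHom K D')
      (l₁' : GraphHom D' (sumGraph L Lbar Lt ls lt)),
      ((sumIncl L Lbar Lt ls lt).comp l = l₁'.comp d') →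
      (∀ (K' : MGraph.{u}) (l' : GraphHom K' L) (d'' : GraphHom K' D'),
        (sumIncl L Lbar Lt ls lt).comp l' = l₁'.comp d'' →
        ∃! κ : GraphHom K' K, l.comp κ = l' ∧ d'.comp κ = d'') →
      ∃! δ : GraphHom D' (pbD K L Lbar l Lt ls lt),
        δ.comp d' = pbd K L Lbar l Lt ls lt ∧
        (pbl1 K L Lbar l Lt ls lt).comp δ = l₁' :=
  ⟨isPullbackSquare_pbd_pbl1, fun _ _ _ hsq hpb =>
    existsUnique_pbD_of_isPullbackSquare ⟨hsq, hpb⟩⟩
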